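/- arXiv:0804.0840 — 3 statements merged into one kernel-verified Lean document; each statement's English description precedes it below -/
import Mathlib

section
/- For every number of colors k there exists a constant C(k) > 0 such that for all sufficiently large n, for any partition of {1,2,...,n} into sets A_1,...,A_k, the total number of monochromatic Schur triples, i.e. triples (x,y,z) with x,y,z all in the same A_i and x+y=z, is at least C(k)·n². -/
/-!
Colour each pair `u < v` of `{1, …, n}` by `c (v - u)`. A monochromatic triangle `u < v < w` is a
Schur triple `(v - u, w - v)` together with a base point `u`, so there are at most `n` times as
many such triangles as Schur triples. By Ramsey's theorem for triangles every set of
`R = R(k)` points contains a monochromatic triangle, and averaging over all `R`-subsets gives at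
least `choose n 3 / choose R 3` monochromatic triangles. Hence there are at least
`n² / (12 choose R 3)` Schur triples once `n ≥ max R 6`.
-/

open Finset

def triangleRamseyBound : ℕ → ℕ
  | 0 => 2
  | m + 1 => (m + 1) * triangleRamseyBound m + 2

theorem exists_monochromatic_triangle {α β : Type*} [LinearOrder α] [DecidableEq β]
    (f : α → α → β) (T : Finset β) (S : Finset α)
    (hf : ∀ u ∈ S, ∀ v ∈ S, u < v → f u v ∈ T) (hS : triangleRamseyBound #T ≤ #S) :
    ∃ u ∈ S, ∃ v ∈ S, ∃ w ∈ S, u < v ∧ v < w ∧ f u v = f v w ∧ f u v = f u w := by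
  obtain ⟨m, hT⟩ : ∃ m, #T = m := ⟨_, rfl⟩
  induction m generalizing T S with
  | zero =>
    have hno_pair : ∀ u ∈ S, ∀ v ∈ S, ¬u < v := by simpa [card_eq_zero.mp hT] using hf
    rw [hT, triangleRamseyBound] at hS
    obtain ⟨u, hu, v, hv, huv⟩ := (one_lt_card (s := S)).mp (by omega)
    exact (huv.lt_or_gt.elim (hno_pair u hu v hv) (hno_pair v hv u hu)).elim
  | succ m ih =>
    rw [hT, triangleRamseyBound] at hS
    have hne : S.Nonempty := card_pos.mp (by omega)
    set x := S.min' hne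
    have hx : x ∈ S := S.min'_mem hne
    have hfx : ∀ y ∈ S.erase x, f x y ∈ T := fun y hy =>
      hf x hx y (mem_of_mem_erase hy) (min'_lt_of_mem_erase_min' _ _ hy)
    -- pigeonhole: `x` is joined to more than `triangleRamseyBound m` points by one colour `i`
    obtain ⟨i, hiT, hN⟩ := exists_lt_card_fiber_of_mul_lt_card_of_maps_to
      (n := triangleRamseyBound m) hfx (by rw [hT, card_erase_of_mem hx]; omega)
    set N := {y ∈ S.erase x | f x y = i}
    have hNS : N ⊆ S := (filter_subset _ _).trans (erase_subset _ _)
    by_cases hi : ∃ u ∈ N, ∃ v ∈ N, u < v ∧ f u v = i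
    · obtain ⟨u, hu, v, hv, huv, hfuv⟩ := hi
      obtain ⟨hu', hxu⟩ := mem_filter.mp hu
      have hxv : f x v = i := (mem_filter.mp hv).2
      exact ⟨x, hx, u, hNS hu, v, hNS hv, min'_lt_of_mem_erase_min' _ _ hu', huv,
        by rw [hxu, hfuv], by rw [hxu, hxv]⟩
    · push Not at hi
      obtain ⟨u, hu, v, hv, w, hw, h⟩ := ih (T.erase i) N
        (fun u hu v hv huv => mem_erase.mpr ⟨hi u hu v hv huv, hf u (hNS hu) v (hNS hv) huv⟩)
        (by rw [card_erase_of_mem hiT, hT]; exact hN.le) (by rw [card_erase_of_mem hiT, hT]; rfl)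
      exact ⟨u, hNS hu, v, hNS hv, w, hNS hw, h⟩

theorem three_le_triangleRamseyBound {m : ℕ} (hm : 0 < m) : 3 ≤ triangleRamseyBound m := by
  cases m with
  | zero => omega
  | succ m =>
    have : 0 < triangleRamseyBound m := by cases m <;> simp [triangleRamseyBound]
    simp only [triangleRamseyBound]
    nlinarith

theorem Finset.choose_le_card_mul_choose_of_forall_exists_subset {α : Type*} [DecidableEq α]
    {I : Finset α} {𝒯 : Finset (Finset α)} {r s : ℕ} (hsr : s ≤ r) (hrI : r ≤ #I)
    (h𝒯 : ∀ T ∈ 𝒯, T ⊆ I ∧ #T = s) (hcover : ∀ S ∈ I.powersetCard r, ∃ T ∈ 𝒯, T ⊆ S) :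
    (#I).choose s ≤ #𝒯 * r.choose s := by
  have hcount : #(I.powersetCard r) * 1 ≤ #𝒯 * (#I - s).choose (r - s) :=
    card_mul_le_card_mul (fun S T => T ⊆ S)
      (fun S hS => by
        obtain ⟨T, hT, hTS⟩ := hcover S hS
        exact card_pos.mpr ⟨T, mem_filter.mpr ⟨hT, hTS⟩⟩)
      (fun T hT => by
        obtain ⟨hTI, rfl⟩ := h𝒯 T hT
        exact (card_filter_powersetCard_subset T I r hTI hsr).le)
  rw [card_powersetCard, mul_one] at hcount
  refine Nat.le_of_mul_le_mul_right ?_ (Nat.choose_pos (Nat.sub_le_sub_right hrI s))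
  calc (#I).choose s * (#I - s).choose (r - s) = (#I).choose r * r.choose s :=
        (Nat.choose_mul hsr).symm
    _ ≤ #𝒯 * (#I - s).choose (r - s) * r.choose s := Nat.mul_le_mul_right _ hcount
    _ = #𝒯 * r.choose s * (#I - s).choose (r - s) := by ring

theorem Nat.pow_three_le_twelve_mul_choose_three {n : ℕ} (hn : 6 ≤ n) :
    n ^ 3 ≤ 12 * n.choose 3 := by
  obtain ⟨m, rfl⟩ : ∃ m, n = m + 6 := ⟨n - 6, by omega⟩
  have h := Nat.descFactorial_eq_factorial_mul_choose (m + 6) 3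
  simp only [Nat.descFactorial, Nat.factorial, Nat.reduceSubDiff, Nat.add_one_sub_one, tsub_zero,
    mul_one] at h
  nlinarith

def schurPairs {β : Type*} [DecidableEq β] (c : ℕ → β) (n : ℕ) : Finset (ℕ × ℕ) :=
  ((Icc 1 n) ×ˢ (Icc 1 n)).filter
    (fun p => p.1 + p.2 ≤ n ∧ c p.1 = c p.2 ∧ c p.1 = c (p.1 + p.2))

theorem choose_three_le_card_schurPairs_mul {β : Type*} [Fintype β] [DecidableEq β] (c : ℕ → β)
    {n : ℕ} (hn : triangleRamseyBound (Fintype.card β) ≤ n) :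
    n.choose 3 ≤ #(schurPairs c n) * n * (triangleRamseyBound (Fintype.card β)).choose 3 := by
  set R := triangleRamseyBound (Fintype.card β)
  -- a Schur pair `(x, y)` and a base point `u` span the triangle `{u, u + x, u + x + y}`, all of
  -- whose differences `x, y, x + y` have the same colour
  set triangles : Finset (Finset ℕ) :=
    ((schurPairs c n ×ˢ Icc 1 n).filter (fun q => q.2 + q.1.1 + q.1.2 ≤ n)).image
      (fun q => {q.2, q.2 + q.1.1, q.2 + q.1.1 + q.1.2})
  have htriangles : ∀ T ∈ triangles, T ⊆ Icc 1 n ∧ #T = 3 := by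
    intro T hT
    obtain ⟨⟨⟨x, y⟩, u⟩, hq, rfl⟩ := mem_image.mp hT
    simp only [schurPairs, mem_filter, mem_product, mem_Icc] at hq ⊢
    refine ⟨fun z hz => ?_, card_eq_three.mpr ⟨_, _, _, by omega, by omega, by omega, rfl⟩⟩
    simp only [mem_insert, mem_singleton] at hz
    rw [mem_Icc]
    omega
  have hcover : ∀ S ∈ (Icc 1 n).powersetCard R, ∃ T ∈ triangles, T ⊆ S := by
    intro S hS
    rw [mem_powersetCard] at hS
    obtain ⟨u, hu, v, hv, w, hw, huv, hvw, hc₁, hc₂⟩ := exists_monochromatic_triangle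
      (fun u v => c (v - u)) univ S (fun _ _ _ _ _ => mem_univ _) (by rw [card_univ, hS.2])
    refine ⟨{u, v, w}, mem_image.mpr ⟨((v - u, w - v), u), ?_, ?_⟩, ?_⟩
    · have hu' := mem_Icc.mp (hS.1 hu)
      have hw' := mem_Icc.mp (hS.1 hw)
      simp only [schurPairs, mem_filter, mem_product, mem_Icc]
      rw [show v - u + (w - v) = w - u by omega]
      refine ⟨⟨⟨?_, ?_, hc₁, hc₂⟩, hu'⟩, ?_⟩ <;> omega
    · rw [Nat.add_sub_cancel' huv.le, Nat.add_sub_cancel' hvw.le]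
    · simp [insert_subset_iff, hu, hv, hw]
  have hR : 3 ≤ R := three_le_triangleRamseyBound (Fintype.card_pos_iff.mpr ⟨c 0⟩)
  calc n.choose 3 ≤ #triangles * R.choose 3 := by
        simpa using choose_le_card_mul_choose_of_forall_exists_subset hR (by simpa using hn)
          htriangles hcover
    _ ≤ #(schurPairs c n) * n * R.choose 3 := by
        gcongr
        exact card_image_le.trans ((card_filter_le _ _).trans (by simp))

/-- For every number of colors `k` there is a constant `C > 0` such that for all
sufficiently large `n`, any `k`-coloring of `{1,…,n}` yields at least `C·n²`
monochromatic Schur triples `(x, y, x+y)`. -/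
theorem schur_triples_lower_bound :
    ∀ k : ℕ, 0 < k → ∃ C : ℝ, 0 < C ∧ ∃ n₀ : ℕ, ∀ n ≥ n₀, ∀ c : ℕ → Fin k,
      C * (n : ℝ) ^ 2 ≤
        (((Finset.Icc 1 n) ×ˢ (Finset.Icc 1 n)).filter
          (fun p => p.1 + p.2 ≤ n ∧ c p.1 = c p.2 ∧ c p.1 = c (p.1 + p.2))).card := by
  intro k hk
  set R := triangleRamseyBound k
  have hR : 0 < R.choose 3 := Nat.choose_pos (three_le_triangleRamseyBound hk)
  refine ⟨1 / (12 * R.choose 3), by positivity, max R 6, fun n hn c => ?_⟩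
  change _ ≤ ((#(schurPairs c n) : ℕ) : ℝ)
  have hcount : n.choose 3 ≤ #(schurPairs c n) * n * R.choose 3 := by
    simpa using choose_three_le_card_schurPairs_mul c (by simpa using le_of_max_le_left hn)
  have hcube := Nat.pow_three_le_twelve_mul_choose_three (le_of_max_le_right hn)
  have hsq : n ^ 2 ≤ #(schurPairs c n) * (12 * R.choose 3) :=
    Nat.le_of_mul_le_mul_left (show n * n ^ 2 ≤ n * _ by nlinarith) (by omega)
  rw [one_div_mul_eq_div, div_le_iff₀ (by positivity)]
  exact_mod_cast hsq
end

section
/- Let N be a prime, R a subset of Z/NZ with |R| = m, let 0 < ε < 1/2 and 0 < κ < 1. Define B = {x ∈ Z/NZ : x (as an integer in (-N/2, N/2]) lies in [-κN, κN] and ‖x r / N‖ ≤ 2ε for all r ∈ R}, where ‖·‖ denotes distance to the nearest integer. Then |B| ≥ ε^m · κ · N (up to a floor in the count of the interval [-κN/2, κN/2]). -/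
/-!
Cut `[0, 1)` into `d = ⌊ε⁻¹⌋` cells of length `1 / d ≤ 2ε` and colour each `x` with
`|x| ≤ κN/2` by the cells containing the fractional parts `{x r / N}`, `r ∈ R`. There are `d ^ m`
colours, so some colour class `G` has at least `d⁻ᵐ (κN - 1) ≥ εᵐ (κN - 1)` elements, and for
`x₀ ∈ G` the translate `G - x₀` lies in the Bohr set: `|x - x₀| ≤ κN`, and `{x r / N}` and
`{x₀ r / N}` are less than `1 / d` apart.
-/

/-- Distance from a real number to the nearest integer. -/
noncomputable def nint (α : ℝ) : ℝ := |α - round α|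

open Finset

section FloorInv

variable {K : Type*} [Field K] [LinearOrder K] [IsStrictOrderedRing K] [FloorSemiring K] {ε : K}

lemma floor_inv_pos (hε : 0 < ε) (hε₁ : ε ≤ 1) : 0 < ⌊ε⁻¹⌋₊ :=
  Nat.floor_pos.2 ((one_le_inv₀ hε).2 hε₁)

lemma le_inv_floor_inv (hε : 0 < ε) (hε₁ : ε ≤ 1) : ε ≤ (⌊ε⁻¹⌋₊ : K)⁻¹ :=
  le_inv_of_le_inv₀ (by exact_mod_cast floor_inv_pos hε hε₁) (Nat.floor_le (by positivity))

lemma inv_floor_inv_le_two_mul (hε : 0 < ε) (hε₁ : ε ≤ 1) : (⌊ε⁻¹⌋₊ : K)⁻¹ ≤ 2 * ε := by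
  have hd : (1 : K) ≤ ⌊ε⁻¹⌋₊ := by exact_mod_cast floor_inv_pos hε hε₁
  have hlt : ε⁻¹ < ⌊ε⁻¹⌋₊ + 1 := Nat.lt_floor_add_one _
  rw [inv_le_iff_one_le_mul₀ (by positivity)]
  rw [inv_lt_iff_one_lt_mul₀ hε] at hlt
  nlinarith

end FloorInv

namespace ZMod

variable {N : ℕ}

lemma abs_valMinAbs_sub_le (x y : ZMod N) :
    |(x - y).valMinAbs| ≤ |x.valMinAbs| + |y.valMinAbs| := by
  have h := (natAbs_valMinAbs_add_le x (-y)).trans (Int.natAbs_add_le _ _)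
  rw [natAbs_valMinAbs_neg, ← sub_eq_add_neg] at h
  simp only [Int.abs_eq_natAbs]
  exact_mod_cast h

lemma valMinAbs_intCast_of_two_mul_abs_lt [NeZero N] {a : ℤ} (ha : 2 * |a| < N) :
    (a : ZMod N).valMinAbs = a :=
  (valMinAbs_spec _ _).2 ⟨rfl, by constructor <;> linarith [le_abs_self a, neg_abs_le a]⟩

lemma le_card_abs_valMinAbs_le [NeZero N] {L : ℝ} (hL₀ : 0 ≤ L) (hLN : 2 * L < N) :
    2 * L - 1 ≤ #{x : ZMod N | |(x.valMinAbs : ℝ)| ≤ L} := by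
  set M := ⌊L⌋
  have hM₀ : 0 ≤ M := Int.floor_nonneg.2 hL₀
  have hML : (M : ℝ) ≤ L := Int.floor_le L
  have hvalMinAbs : ∀ a ∈ Icc (-M) M, (a : ZMod N).valMinAbs = a ∧ |(a : ℝ)| ≤ L := by
    intro a ha
    have haM : |a| ≤ M := abs_le.2 (mem_Icc.1 ha)
    have haM' : |(a : ℝ)| ≤ M := by exact_mod_cast haM
    refine ⟨valMinAbs_intCast_of_two_mul_abs_lt ?_, haM'.trans hML⟩
    have : ((2 * |a| : ℤ) : ℝ) < N := by push_cast; linarith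
    exact_mod_cast this
  have hcard := card_le_card_of_injOn (Int.cast : ℤ → ZMod N)
    (s := Icc (-M) M) (t := {x : ZMod N | |(x.valMinAbs : ℝ)| ≤ L})
    (fun a ha => by simpa [(hvalMinAbs a ha).1] using (hvalMinAbs a ha).2)
    (fun a ha b hb hab => by
      rw [← (hvalMinAbs a ha).1, ← (hvalMinAbs b hb).1, hab])
  rw [Int.card_Icc, sub_neg_eq_add] at hcard
  calc 2 * L - 1 ≤ ((M + 1 + M : ℤ) : ℝ) := by push_cast; linarith [Int.lt_floor_add_one L]
    _ = ((M + 1 + M).toNat : ℝ) := by rw [← Int.cast_natCast, Int.toNat_of_nonneg (by omega)]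
    _ ≤ _ := by exact_mod_cast hcard

lemma nint_val_sub_le [NeZero N] (a b : ZMod N) :
    nint (((a - b).val : ℝ) / N) ≤ |(a.val : ℝ) / N - b.val / N| := by
  obtain ⟨k, hk⟩ : (N : ℤ) ∣ (a - b).val - ((a.val : ℤ) - b.val) := by
    rw [← intCast_zmod_eq_zero_iff_dvd]
    push_cast
    simp
  have hN : (N : ℝ) ≠ 0 := NeZero.ne _
  have hk' : ((a - b).val : ℝ) / N - k = a.val / N - b.val / N := by
    field_simp
    exact_mod_cast (by linarith : ((a - b).val : ℤ) - N * k = a.val - b.val)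
  calc nint (((a - b).val : ℝ) / N) ≤ |((a - b).val : ℝ) / N - k| := round_le _ k
    _ = _ := by rw [hk']

end ZMod

open ZMod

section Bohr

variable {N : ℕ}

noncomputable def bohrSet (R : Finset (ZMod N)) (δ ρ : ℝ) : Set (ZMod N) :=
  {x | |(x.valMinAbs : ℝ)| ≤ ρ ∧ ∀ r ∈ R, nint (((x * r).val : ℝ) / N) ≤ δ}

lemma bohrSet_mono (R : Finset (ZMod N)) {δ δ' : ℝ} (hδ : δ ≤ δ') (ρ : ℝ) :
    bohrSet R δ ρ ⊆ bohrSet R δ' ρ :=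
  fun _ ⟨hx, hxR⟩ => ⟨hx, fun r hr => (hxR r hr).trans hδ⟩

/-- `(x * r).val / N` is the fractional part `{x r / N}`, and `fracCell R d x r` is the index `t`
of the cell `[t / d, (t + 1) / d)` containing it. -/
noncomputable def fracCell (R : Finset (ZMod N)) (d : ℕ) (x : ZMod N) : R → ℕ :=
  fun r => ⌊d * ((x * r).val : ℝ) / N⌋₊

variable (R : Finset (ZMod N)) {d : ℕ}

lemma fracCell_mem_piFinset [NeZero N] (hd : 0 < d) (x : ZMod N) :
    fracCell R d x ∈ Fintype.piFinset fun _ => range d := by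
  refine Fintype.mem_piFinset.2 fun r => mem_range.2 ((Nat.floor_lt (by positivity)).2 ?_)
  have hN : (0 : ℝ) < N := by exact_mod_cast NeZero.pos N
  have hval : ((x * r).val : ℝ) < N := by exact_mod_cast (x * r).val_lt
  rw [div_lt_iff₀ hN]
  exact mul_lt_mul_of_pos_left hval (by exact_mod_cast hd)

lemma abs_sub_lt_of_fracCell_eq (hd : 0 < d) {x y : ZMod N} (r : R)
    (hxy : fracCell R d x r = fracCell R d y r) :
    |((x * r).val : ℝ) / N - (y * r).val / N| < (d : ℝ)⁻¹ := by
  have hd' : (0 : ℝ) < d := by exact_mod_cast hd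
  have hfloor : ⌊d * ((x * r).val : ℝ) / N⌋ = ⌊d * ((y * r).val : ℝ) / N⌋ := by
    rw [← Int.natCast_floor_eq_floor (by positivity), ← Int.natCast_floor_eq_floor (by positivity)]
    exact congrArg _ hxy
  have h := Int.abs_sub_lt_one_of_floor_eq_floor hfloor
  rw [mul_div_assoc, mul_div_assoc, ← mul_sub, abs_mul, abs_of_pos hd'] at h
  rwa [← one_div, lt_div_iff₀ hd', mul_comm]

lemma sub_mem_bohrSet [NeZero N] (hd : 0 < d) {x y : ZMod N} {a b : ℝ}
    (hx : |(x.valMinAbs : ℝ)| ≤ a) (hy : |(y.valMinAbs : ℝ)| ≤ b)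
    (hxy : fracCell R d x = fracCell R d y) :
    x - y ∈ bohrSet R (d : ℝ)⁻¹ (a + b) := by
  refine ⟨?_, fun r hr => ?_⟩
  · calc |((x - y).valMinAbs : ℝ)| ≤ |(x.valMinAbs : ℝ)| + |(y.valMinAbs : ℝ)| := by
          exact_mod_cast abs_valMinAbs_sub_le x y
      _ ≤ a + b := add_le_add hx hy
  · rw [sub_mul]
    exact (nint_val_sub_le _ _).trans (abs_sub_lt_of_fracCell_eq R hd ⟨r, hr⟩ (congrFun hxy _)).le

lemma card_le_pow_mul_ncard_bohrSet [NeZero N] (hd : 0 < d) (ρ : ℝ) :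
    (#{x : ZMod N | |(x.valMinAbs : ℝ)| ≤ ρ / 2} : ℝ) ≤ d ^ #R * (bohrSet R (d : ℝ)⁻¹ ρ).ncard := by
  set S : Finset (ZMod N) := {x | |(x.valMinAbs : ℝ)| ≤ ρ / 2}
  have hdR : (0 : ℝ) < d ^ #R := by positivity
  obtain ⟨c, -, hc⟩ := exists_le_card_fiber_of_nsmul_le_card_of_maps_to
    (fun x _ => fracCell_mem_piFinset R hd x)
    ⟨fun _ => 0, Fintype.mem_piFinset.2 fun _ => mem_range.2 hd⟩
    (s := S) (b := (#S : ℝ) / d ^ #R) (by simp [mul_div_cancel₀ _ hdR.ne'])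
  set G := {x ∈ S | fracCell R d x = c}
  have hG : #G ≤ (bohrSet R (d : ℝ)⁻¹ ρ).ncard := by
    rcases G.eq_empty_or_nonempty with hempty | ⟨x₀, hx₀⟩
    · simp [hempty]
    have hsub : (G.image (· - x₀) : Set (ZMod N)) ⊆ bohrSet R (d : ℝ)⁻¹ ρ := by
      rw [coe_image]
      rintro _ ⟨x, hx, rfl⟩
      obtain ⟨hxS, hxc⟩ := mem_filter.1 hx
      obtain ⟨hx₀S, hx₀c⟩ := mem_filter.1 hx₀
      rw [← add_halves ρ]
      exact sub_mem_bohrSet R hd (mem_filter.1 hxS).2 (mem_filter.1 hx₀S).2 (hxc.trans hx₀c.symm)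
    rw [← card_image_of_injective G (sub_left_injective (b := x₀)), ← Set.ncard_coe_finset]
    exact Set.ncard_le_ncard hsub
  calc (#S : ℝ) = d ^ #R * (#S / d ^ #R) := (mul_div_cancel₀ _ hdR.ne').symm
    _ ≤ d ^ #R * #G := by gcongr
    _ ≤ d ^ #R * (bohrSet R (d : ℝ)⁻¹ ρ).ncard := by gcongr

end Bohr

theorem bohr_set_lower_bound_general (N : ℕ) (R : Finset (ZMod N)) (m : ℕ)
    (hm : R.card = m) (ε κ : ℝ) (hε : 0 < ε) (hε' : ε < 1 / 2)
    (hκ' : κ < 1) :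
    ε ^ m * (κ * N - 1) ≤
      ({x : ZMod N | |(x.valMinAbs : ℝ)| ≤ κ * N ∧
        ∀ r ∈ R, nint (((x * r).val : ℝ) / N) ≤ 2 * ε} : Set (ZMod N)).ncard := by
  show _ ≤ ((bohrSet R (2 * ε) (κ * N)).ncard : ℝ)
  rcases le_or_gt (κ * N - 1) 0 with hκN | hκN
  · exact (mul_nonpos_of_nonneg_of_nonpos (by positivity) hκN).trans (Nat.cast_nonneg _)
  have : NeZero N := ⟨by rintro rfl; norm_num at hκN⟩
  have hN : (0 : ℝ) < N := by exact_mod_cast NeZero.pos N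
  have hε₁ : ε ≤ 1 := by linarith
  set d := ⌊ε⁻¹⌋₊
  have hd : 0 < d := floor_inv_pos hε hε₁
  have hinterval := le_card_abs_valMinAbs_le (N := N) (L := κ * N / 2) (by linarith) (by nlinarith)
  have hpigeon := card_le_pow_mul_ncard_bohrSet R hd (κ * N)
  have hwidth : (bohrSet R (d : ℝ)⁻¹ (κ * N)).ncard ≤ (bohrSet R (2 * ε) (κ * N)).ncard :=
    Set.ncard_le_ncard (bohrSet_mono R (inv_floor_inv_le_two_mul hε hε₁) _)
  subst hm
  calc ε ^ #R * (κ * N - 1) ≤ (d : ℝ)⁻¹ ^ #R * (κ * N - 1) := by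
        gcongr
        exact le_inv_floor_inv hε hε₁
    _ ≤ (d : ℝ)⁻¹ ^ #R * (d ^ #R * (bohrSet R (d : ℝ)⁻¹ (κ * N)).ncard) := by
        gcongr
        linarith
    _ = (bohrSet R (d : ℝ)⁻¹ (κ * N)).ncard := by
        rw [inv_pow, inv_mul_cancel_left₀ (by positivity)]
    _ ≤ _ := by exact_mod_cast hwidth

/-- Bohr-set lower bound: for `N` prime, `R ⊆ ℤ/Nℤ` with `|R| = m`,
`0 < ε < 1/2` and `0 < κ < 1`, the Bohr set
`B = {x : |x| ≤ κN and ‖xr/N‖ ≤ 2ε for all r ∈ R}` satisfies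
`|B| ≥ ε^m (κN - 1)` (the `-1` accounts for the floor). -/
theorem bohr_set_lower_bound (N : ℕ) [Fact N.Prime] (R : Finset (ZMod N)) (m : ℕ)
    (hm : R.card = m) (ε κ : ℝ) (hε : 0 < ε) (hε' : ε < 1 / 2)
    (hκ : 0 < κ) (hκ' : κ < 1) :
    ε ^ m * (κ * N - 1) ≤
      ({x : ZMod N | |(x.valMinAbs : ℝ)| ≤ κ * N ∧
        ∀ r ∈ R, nint (((x * r).val : ℝ) / N) ≤ 2 * ε} : Set (ZMod N)).ncard :=
  bohr_set_lower_bound_general N R m hm ε κ hε hε' hκ'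
end

section
/- Let N be a prime and a, β : Z/NZ → R with β ≥ 0, Σ_x β(x) = 1 (so β̂(0) = 1), and a' = a * β * β (convolution on Z/NZ). Suppose R ⊆ Z/NZ with |â(r)| ≤ δ for all r ∉ R, |â(r)| ≤ 1 for all r, and |1 - β̂(r)⁴β̂(-r)²| ≤ 384ε² for r ∈ R. If moreover Σ_r |â(r)|^{5/2} ≤ C_{5/2} and Σ_r |â(r)|³ ≤ C_3, then |Σ_{x+y=z} a(x)a(y)a(z) - Σ_{x+y=z} a'(x)a'(y)a'(z)| ≤ N^{-1}(384 ε² |R| + 2 C_{5/2}^{2/3} C_3^{1/3} δ^{1/3}). -/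
/-- The Fourier transform on `ℤ/Nℤ`: `f̂(r) = Σ_x f(x) e(-xr/N)`. -/
noncomputable def dft {N : ℕ} [NeZero N] (f : ZMod N → ℂ) (r : ZMod N) : ℂ :=
  ∑ x : ZMod N, f x * Complex.exp (-2 * Real.pi * Complex.I * (((x * r).val : ℝ) / N))

/-- Convolution on `ℤ/Nℤ` of real-valued functions. -/
noncomputable def conv {N : ℕ} [NeZero N] (f g : ZMod N → ℝ) (x : ZMod N) : ℝ :=
  ∑ y : ZMod N, f y * g (x - y)

/-!
By the Fourier identity `Σ_{x+y=z} f(x) g(y) h(z) = N⁻¹ Σ_r f̂(r) ĝ(r) ĥ(-r)` and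
`(a * β * β)^ = â β̂²`, the difference of the two counts is
`N⁻¹ Σ_r â(r)² â(-r) (1 - β̂(r)⁴ β̂(-r)²)`. On `R` the last factor is at most `384 ε²`
and `|â| ≤ 1`; off `R` it is at most `2` and `|â(r)|² ≤ δ^{1/3} |â(r)|^{5/3}`, and Hölder
with exponents `3/2` and `3` bounds `Σ_r |â(r)|^{5/3} |â(-r)|` by `C_{5/2}^{2/3} C_3^{1/3}`.
-/

open Finset

section Fourier

variable {N : ℕ} [NeZero N]

lemma dft_eq_sum_stdAddChar (f : ZMod N → ℂ) (r : ZMod N) :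
    dft f r = ∑ x, f x * ZMod.stdAddChar (-(x * r)) := by
  refine sum_congr rfl fun x _ => ?_
  rw [AddChar.map_neg_eq_inv, ZMod.stdAddChar_apply, ZMod.toCircle_apply, ← Complex.exp_neg]
  congr 2
  push_cast
  ring

lemma sum_stdAddChar_mul (t : ZMod N) :
    ∑ r : ZMod N, ZMod.stdAddChar (r * t) = if t = 0 then (N : ℂ) else 0 := by
  rw [AddChar.sum_mulShift t (ZMod.isPrimitive_stdAddChar N), ZMod.card]
  split_ifs <;> simp

lemma norm_dft_le (f : ZMod N → ℂ) (r : ZMod N) : ‖dft f r‖ ≤ ∑ x, ‖f x‖ := by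
  rw [dft_eq_sum_stdAddChar]
  refine (norm_sum_le _ _).trans_eq (sum_congr rfl fun x _ => ?_)
  rw [norm_mul, ZMod.stdAddChar_apply, Circle.norm_coe, mul_one]

lemma dft_conv (f g : ZMod N → ℝ) (r : ZMod N) :
    dft (fun x => (conv f g x : ℂ)) r =
      dft (fun x => (f x : ℂ)) r * dft (fun x => (g x : ℂ)) r := by
  simp only [dft_eq_sum_stdAddChar, sum_mul_sum, conv, Complex.ofReal_sum, Complex.ofReal_mul]
  simp only [sum_mul]
  rw [sum_comm]
  refine sum_congr rfl fun y _ => Fintype.sum_equiv (Equiv.subRight y) _ _ fun x => ?_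
  rw [Equiv.subRight_apply, show -(x * r) = -(y * r) + -((x - y) * r) by ring,
    AddChar.map_add_eq_mul]
  ring

lemma norm_dft_le_one {β : ZMod N → ℝ} (hβ0 : ∀ x, 0 ≤ β x) (hβ1 : ∑ x, β x = 1)
    (r : ZMod N) : ‖dft (fun x => (β x : ℂ)) r‖ ≤ 1 :=
  (norm_dft_le _ r).trans_eq <| by
    simp only [Complex.norm_real, Real.norm_eq_abs, abs_of_nonneg (hβ0 _), hβ1]

lemma sum_dft_mul_dft_mul_dft_neg (f g h : ZMod N → ℂ) :
    ∑ r, dft f r * dft g r * dft h (-r) = N * ∑ x, ∑ y, f x * g y * h (x + y) := by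
  have expand : ∀ r, dft f r * dft g r * dft h (-r) =
      ∑ x, ∑ y, ∑ z, f x * g y * h z * ZMod.stdAddChar (r * (z - x - y)) := by
    intro r
    rw [dft_eq_sum_stdAddChar, dft_eq_sum_stdAddChar, dft_eq_sum_stdAddChar, sum_mul_sum,
      sum_mul]
    simp_rw [sum_mul, mul_sum]
    refine sum_congr rfl fun x _ => sum_congr rfl fun y _ => sum_congr rfl fun z _ => ?_
    rw [show r * (z - x - y) = -(x * r) + -(y * r) + -(z * -r) by ring, AddChar.map_add_eq_mul,
      AddChar.map_add_eq_mul]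
    ring
  calc ∑ r, dft f r * dft g r * dft h (-r)
      = ∑ x, ∑ y, ∑ z, f x * g y * h z * ∑ r, ZMod.stdAddChar (r * (z - x - y)) := by
        simp only [expand, mul_sum]
        rw [sum_comm]
        refine sum_congr rfl fun x _ => ?_
        rw [sum_comm]
        exact sum_congr rfl fun y _ => sum_comm
    _ = N * ∑ x, ∑ y, f x * g y * h (x + y) := by
        simp only [sum_stdAddChar_mul, sub_sub, sub_eq_zero, mul_ite, mul_zero, sum_ite_eq',
          mem_univ, if_true, mul_sum]
        exact sum_congr rfl fun x _ => sum_congr rfl fun y _ => mul_comm _ _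

end Fourier

lemma norm_one_sub_pow_mul_pow_le_two {z w : ℂ} (hz : ‖z‖ ≤ 1) (hw : ‖w‖ ≤ 1) (m n : ℕ) :
    ‖1 - z ^ m * w ^ n‖ ≤ 2 := by
  have hzw : ‖z ^ m * w ^ n‖ ≤ 1 := by
    rw [norm_mul, norm_pow, norm_pow]
    exact mul_le_one₀ (pow_le_one₀ (norm_nonneg _) hz) (by positivity)
      (pow_le_one₀ (norm_nonneg _) hw)
  linarith [norm_sub_le (1 : ℂ) (z ^ m * w ^ n), norm_one (α := ℂ)]

section SchurCount

variable {N : ℕ} [NeZero N]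

def schurCount (f : ZMod N → ℝ) : ℝ :=
  ∑ x, ∑ y, f x * f y * f (x + y)

lemma schurCount_eq_sum_dft (f : ZMod N → ℝ) :
    (schurCount f : ℂ) =
      (N : ℂ)⁻¹ * ∑ r, dft (fun x => (f x : ℂ)) r ^ 2 * dft (fun x => (f x : ℂ)) (-r) := by
  simp only [sq, sum_dft_mul_dft_mul_dft_neg, inv_mul_cancel_left₀ (NeZero.ne (N : ℂ)),
    schurCount]
  push_cast
  rfl

lemma abs_schurCount_sub_schurCount_conv_le (a β : ZMod N → ℝ) :
    |schurCount a - schurCount (conv (conv a β) β)| ≤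
      (N : ℝ)⁻¹ * ∑ r, ‖dft (fun x => (a x : ℂ)) r‖ ^ 2 * ‖dft (fun x => (a x : ℂ)) (-r)‖ *
        ‖1 - dft (fun x => (β x : ℂ)) r ^ 4 * dft (fun x => (β x : ℂ)) (-r) ^ 2‖ := by
  set F := dft (fun x => (a x : ℂ))
  set B := dft (fun x => (β x : ℂ))
  have hsmooth : dft (fun x => (conv (conv a β) β x : ℂ)) = fun r => F r * B r ^ 2 := by
    ext r
    rw [dft_conv, dft_conv, sq, mul_assoc]
  have hdiff : ((schurCount a - schurCount (conv (conv a β) β) : ℝ) : ℂ) =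
      (N : ℂ)⁻¹ * ∑ r, F r ^ 2 * F (-r) * (1 - B r ^ 4 * B (-r) ^ 2) := by
    rw [Complex.ofReal_sub, schurCount_eq_sum_dft, schurCount_eq_sum_dft, hsmooth, ← mul_sub,
      ← sum_sub_distrib]
    congr 1
    exact sum_congr rfl fun r _ => by ring
  rw [← Real.norm_eq_abs, ← Complex.norm_real, hdiff, norm_mul, norm_inv, Complex.norm_natCast]
  gcongr
  refine (norm_sum_le _ _).trans_eq (sum_congr rfl fun r _ => ?_)
  rw [norm_mul, norm_mul, norm_pow]

end SchurCount

section MajorMinorArcs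

variable {G : Type*} [InvolutiveNeg G] {u c : G → ℝ}

lemma sum_sq_mul_neg_mul_le_card (s : Finset G) {η : ℝ} (hu0 : ∀ r, 0 ≤ u r)
    (hu1 : ∀ r, u r ≤ 1) (hc0 : ∀ r, 0 ≤ c r) (hc : ∀ r ∈ s, c r ≤ η) :
    ∑ r ∈ s, u r ^ 2 * u (-r) * c r ≤ η * #s := by
  rw [mul_comm, ← nsmul_eq_mul]
  refine sum_le_card_nsmul _ _ _ fun r hr => ?_
  calc u r ^ 2 * u (-r) * c r ≤ 1 * c r :=
        mul_le_mul_of_nonneg_right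
          (mul_le_one₀ (pow_le_one₀ (hu0 r) (hu1 r)) (hu0 _) (hu1 _)) (hc0 r)
    _ ≤ η := (one_mul _).trans_le (hc r hr)

variable [Fintype G]

lemma sum_rpow_mul_neg_le (hu0 : ∀ r, 0 ≤ u r) :
    ∑ r, u r ^ ((5 : ℝ) / 3) * u (-r) ≤
      (∑ r, u r ^ ((5 : ℝ) / 2)) ^ ((2 : ℝ) / 3) * (∑ r, u r ^ 3) ^ ((1 : ℝ) / 3) := by
  have hpq : Real.HolderConjugate (3 / 2) 3 := ⟨by norm_num, by norm_num, by norm_num⟩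
  have holder := Real.inner_le_Lp_mul_Lq_of_nonneg univ hpq
    (fun r _ => Real.rpow_nonneg (hu0 r) ((5 : ℝ) / 3)) (fun r _ => hu0 (-r))
  have h52 : ∀ r, (u r ^ ((5 : ℝ) / 3)) ^ ((3 : ℝ) / 2) = u r ^ ((5 : ℝ) / 2) := fun r => by
    rw [← Real.rpow_mul (hu0 r)]
    norm_num
  have h3 : ∑ r, u (-r) ^ (3 : ℝ) = ∑ r, u r ^ 3 :=
    Fintype.sum_equiv (Equiv.neg G) _ _ fun r => by norm_cast
  simp only [h52, h3] at holder
  rwa [show (1 : ℝ) / (3 / 2) = 2 / 3 by norm_num] at holder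

lemma sq_le_rpow_mul_rpow {x δ : ℝ} (hx : 0 ≤ x) (hxδ : x ≤ δ) :
    x ^ 2 ≤ δ ^ ((1 : ℝ) / 3) * x ^ ((5 : ℝ) / 3) := by
  calc x ^ 2 = x ^ ((1 : ℝ) / 3) * x ^ ((5 : ℝ) / 3) := by
        rw [← Real.rpow_add' hx (by norm_num)]
        norm_num
    _ ≤ δ ^ ((1 : ℝ) / 3) * x ^ ((5 : ℝ) / 3) := by gcongr

lemma sum_compl_sq_mul_neg_mul_le [DecidableEq G] (R : Finset G) {δ : ℝ} (hδ : 0 ≤ δ)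
    (hu0 : ∀ r, 0 ≤ u r) (hminor : ∀ r ∉ R, u r ≤ δ) (hc2 : ∀ r, c r ≤ 2) :
    ∑ r ∈ Rᶜ, u r ^ 2 * u (-r) * c r ≤
      2 * δ ^ ((1 : ℝ) / 3) * ∑ r, u r ^ ((5 : ℝ) / 3) * u (-r) := by
  calc ∑ r ∈ Rᶜ, u r ^ 2 * u (-r) * c r
      ≤ ∑ r ∈ Rᶜ, 2 * δ ^ ((1 : ℝ) / 3) * (u r ^ ((5 : ℝ) / 3) * u (-r)) := by
        refine sum_le_sum fun r hr => ?_
        have hpow := sq_le_rpow_mul_rpow (hu0 r) (hminor r (mem_compl.1 hr))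
        calc u r ^ 2 * u (-r) * c r ≤ u r ^ 2 * u (-r) * 2 :=
              mul_le_mul_of_nonneg_left (hc2 r) (mul_nonneg (sq_nonneg _) (hu0 _))
          _ ≤ δ ^ ((1 : ℝ) / 3) * u r ^ ((5 : ℝ) / 3) * u (-r) * 2 := by
              gcongr
              exact hu0 _
          _ = _ := by ring
    _ ≤ 2 * δ ^ ((1 : ℝ) / 3) * ∑ r, u r ^ ((5 : ℝ) / 3) * u (-r) := by
        rw [← mul_sum]
        gcongr
        · exact fun r _ _ => mul_nonneg (Real.rpow_nonneg (hu0 r) _) (hu0 _)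
        · exact subset_univ _

end MajorMinorArcs

theorem smoothing_comparison_general (N : ℕ) [Fact N.Prime] (a β : ZMod N → ℝ)
    (hβ0 : ∀ x, 0 ≤ β x) (hβ1 : ∑ x : ZMod N, β x = 1)
    (R : Finset (ZMod N)) (δ ε C52 C3 : ℝ) (hδ : 0 < δ)
    (hminor : ∀ r ∉ R, ‖dft (fun x => (a x : ℂ)) r‖ ≤ δ)
    (hbd : ∀ r, ‖dft (fun x => (a x : ℂ)) r‖ ≤ 1)
    (hβR : ∀ r ∈ R,
      ‖1 - (dft (fun x => (β x : ℂ)) r) ^ 4 *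
        (dft (fun x => (β x : ℂ)) (-r)) ^ 2‖ ≤ 384 * ε ^ 2)
    (h52 : ∑ r : ZMod N, (‖dft (fun x => (a x : ℂ)) r‖) ^ ((5 : ℝ) / 2) ≤ C52)
    (h3 : ∑ r : ZMod N, (‖dft (fun x => (a x : ℂ)) r‖) ^ (3 : ℕ) ≤ C3) :
    |(∑ x : ZMod N, ∑ y : ZMod N, a x * a y * a (x + y)) -
      ∑ x : ZMod N, ∑ y : ZMod N,
        conv (conv a β) β x * conv (conv a β) β y * conv (conv a β) β (x + y)|
      ≤ (N : ℝ)⁻¹ * (384 * ε ^ 2 * R.card +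
          2 * C52 ^ ((2 : ℝ) / 3) * C3 ^ ((1 : ℝ) / 3) * δ ^ ((1 : ℝ) / 3)) := by
  set u : ZMod N → ℝ := fun r => ‖dft (fun x => (a x : ℂ)) r‖
  set B := dft (fun x => (β x : ℂ))
  have hc2 : ∀ r, ‖1 - B r ^ 4 * B (-r) ^ 2‖ ≤ 2 := fun r =>
    norm_one_sub_pow_mul_pow_le_two (norm_dft_le_one hβ0 hβ1 r) (norm_dft_le_one hβ0 hβ1 (-r)) 4 2
  have hC52 : 0 ≤ C52 := (sum_nonneg fun r _ => by positivity).trans h52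
  have hholder :
      ∑ r, u r ^ ((5 : ℝ) / 3) * u (-r) ≤ C52 ^ ((2 : ℝ) / 3) * C3 ^ ((1 : ℝ) / 3) :=
    (sum_rpow_mul_neg_le fun r => norm_nonneg _).trans (by gcongr)
  calc _ ≤ (N : ℝ)⁻¹ * ∑ r, u r ^ 2 * u (-r) * ‖1 - B r ^ 4 * B (-r) ^ 2‖ :=
        abs_schurCount_sub_schurCount_conv_le a β
    _ = (N : ℝ)⁻¹ * (∑ r ∈ R, u r ^ 2 * u (-r) * ‖1 - B r ^ 4 * B (-r) ^ 2‖ +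
          ∑ r ∈ Rᶜ, u r ^ 2 * u (-r) * ‖1 - B r ^ 4 * B (-r) ^ 2‖) := by
        rw [sum_add_sum_compl]
    _ ≤ (N : ℝ)⁻¹ * (384 * ε ^ 2 * R.card +
          2 * δ ^ ((1 : ℝ) / 3) * (C52 ^ ((2 : ℝ) / 3) * C3 ^ ((1 : ℝ) / 3))) := by
        gcongr
        · exact sum_sq_mul_neg_mul_le_card R (fun r => norm_nonneg _) hbd
            (fun r => norm_nonneg _) hβR
        · exact (sum_compl_sq_mul_neg_mul_le R hδ.le (fun r => norm_nonneg _) hminor hc2).trans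
            (by gcongr)
    _ = _ := by ring

/-- Comparison of the Schur-triple counts of `a` and its smoothing
`a' = a * β * β`. -/
theorem smoothing_comparison (N : ℕ) [Fact N.Prime] (a β : ZMod N → ℝ)
    (hβ0 : ∀ x, 0 ≤ β x) (hβ1 : ∑ x : ZMod N, β x = 1)
    (R : Finset (ZMod N)) (δ ε C52 C3 : ℝ) (hδ : 0 < δ) (hε : 0 < ε)
    (hminor : ∀ r ∉ R, ‖dft (fun x => (a x : ℂ)) r‖ ≤ δ)
    (hbd : ∀ r, ‖dft (fun x => (a x : ℂ)) r‖ ≤ 1)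
    (hβR : ∀ r ∈ R,
      ‖1 - (dft (fun x => (β x : ℂ)) r) ^ 4 *
        (dft (fun x => (β x : ℂ)) (-r)) ^ 2‖ ≤ 384 * ε ^ 2)
    (h52 : ∑ r : ZMod N, (‖dft (fun x => (a x : ℂ)) r‖) ^ ((5 : ℝ) / 2) ≤ C52)
    (h3 : ∑ r : ZMod N, (‖dft (fun x => (a x : ℂ)) r‖) ^ (3 : ℕ) ≤ C3) :
    |(∑ x : ZMod N, ∑ y : ZMod N, a x * a y * a (x + y)) -
      ∑ x : ZMod N, ∑ y : ZMod N,
        conv (conv a β) β x * conv (conv a β) β y * conv (conv a β) β (x + y)|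
      ≤ (N : ℝ)⁻¹ * (384 * ε ^ 2 * R.card +
          2 * C52 ^ ((2 : ℝ) / 3) * C3 ^ ((1 : ℝ) / 3) * δ ^ ((1 : ℝ) / 3)) :=
  smoothing_comparison_general N a β hβ0 hβ1 R δ ε C52 C3 hδ hminor hbd hβR h52 h3
end
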